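/- arXiv:1909.00780 — 2 statements merged into one kernel-verified Lean document; each statement's English description precedes it below -/
import Mathlib

section
/- Let f(z) = Σ_{n=0}^∞ a_n z^n be analytic in the unit disk D with Re f(z) < 1 for all z ∈ D and a_0 = f(0) ∈ [0,1) real. Then for every r with 0 ≤ r ≤ 1/3 one has Σ_{n=0}^∞ |a_n| r^n ≤ a_0 + 2(1−a_0) r/(1−r) ≤ 1. -/
/-!
Fix `0 < n` and `ρ < 1`. Integrating the power series term by term against `e^{-inθ}` on the circle
`|z| = ρ`, and writing `2 Re f = f + conj f`, the `n`-th Fourier coefficient of `θ ↦ Re f(ρe^{iθ})`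
is `aₙρⁿ/2` while its mean is `Re a₀`. Because `1 - Re f > 0`, the `n`-th Fourier coefficient of
`1 - Re f` is bounded in modulus by its mean; this gives `|aₙ|ρⁿ ≤ 2(1 - a₀)`, and hence
`|aₙ| ≤ 2(1 - a₀)` as `ρ → 1`. Summing against `rⁿ` gives the first inequality, and
`2r/(1 - r) ≤ 1` for `r ≤ 1/3` the second.
-/

open Complex Metric MeasureTheory Filter Topology FormalMultilinearSeries
open scoped NNReal ENNReal ComplexConjugate Real

theorem hasFPowerSeriesOnBall_ofScalars_of_hasSum {f : ℂ → ℂ} {a : ℕ → ℂ} {R : ℝ≥0} (hR : 0 < R)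
    (hf : ∀ z ∈ ball (0 : ℂ) R, HasSum (fun n => a n * z ^ n) (f z)) :
    HasFPowerSeriesOnBall f (ofScalars ℂ a) 0 R where
  r_le := ENNReal.le_of_forall_nnreal_lt fun r hr => by
    have hz : ((r : ℝ) : ℂ) ∈ ball (0 : ℂ) R := by simpa using hr
    refine (ofScalars ℂ a).le_radius_of_tendsto (l := 0) ?_
    simpa [ofScalars_norm] using (hf _ hz).summable.tendsto_atTop_zero.norm
  r_pos := mod_cast hR
  hasSum hy := by simpa [ofScalars_apply_eq, mul_comm] using hf _ (by simpa using hy)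

theorem integral_exp_intCast_mul_mul_I (k : ℤ) :
    ∫ θ in (0 : ℝ)..2 * π, exp (k * θ * I) = if k = 0 then (2 * π : ℂ) else 0 := by
  split_ifs with hk
  · simp [hk]
  · have hkI : (k : ℂ) * I ≠ 0 := by simp [hk]
    have hperiod : exp (k * I * (2 * π : ℝ)) = 1 := by
      rw [← exp_int_mul_two_pi_mul_I k]; push_cast; ring_nf
    simp_rw [mul_right_comm (k : ℂ) _ I, integral_exp_mul_complex hkI, hperiod]
    simp

theorem circleMap_zero_mem_eball {R : ℝ≥0∞} {ρ : ℝ≥0} (hρ : (ρ : ℝ≥0∞) < R) (θ : ℝ) :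
    circleMap 0 ρ θ ∈ eball (0 : ℂ) R := by
  rw [mem_eball_zero_iff, ← enorm_norm, norm_circleMap_zero]
  simpa using hρ

namespace HasFPowerSeriesOnBall

variable {f : ℂ → ℂ} {a : ℕ → ℂ} {R : ℝ≥0∞} {ρ : ℝ≥0}

theorem continuous_comp_circleMap (hp : HasFPowerSeriesOnBall f (ofScalars ℂ a) 0 R)
    (hρ : (ρ : ℝ≥0∞) < R) : Continuous fun θ => f (circleMap 0 ρ θ) :=
  hp.continuousOn.comp_continuous (continuous_circleMap 0 ρ) (circleMap_zero_mem_eball hρ)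

theorem hasSum_integral_circleMap_mul_exp (hp : HasFPowerSeriesOnBall f (ofScalars ℂ a) 0 R)
    (hρ : (ρ : ℝ≥0∞) < R) (k : ℤ) :
    HasSum (fun m : ℕ => a m * ρ ^ m * if (m : ℤ) + k = 0 then (2 * π : ℂ) else 0)
      (∫ θ in (0 : ℝ)..2 * π, f (circleMap 0 ρ θ) * exp (k * θ * I)) := by
  have hterm (m : ℕ) (θ : ℝ) : a m * circleMap 0 ρ θ ^ m * exp (k * θ * I) =
      a m * ρ ^ m * exp (((m + k : ℤ) : ℂ) * θ * I) := by
    rw [circleMap_zero, mul_pow, ← exp_nat_mul, mul_assoc (a m), mul_assoc, ← exp_add]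
    push_cast; ring_nf
  have hsummable : Summable fun m => ‖a m‖ * (ρ : ℝ) ^ m := by
    simpa [ofScalars_norm] using (ofScalars ℂ a).summable_norm_mul_pow (hρ.trans_le hp.r_le)
  have hseries (θ : ℝ) : HasSum (fun m => a m * circleMap 0 ρ θ ^ m) (f (circleMap 0 ρ θ)) := by
    simpa [ofScalars_apply_eq, mul_comm] using hp.hasSum (circleMap_zero_mem_eball hρ θ)
  have key := intervalIntegral.hasSum_integral_of_dominated_convergence
    (F := fun m θ => a m * circleMap 0 ρ θ ^ m * exp (k * θ * I))
    (bound := fun m _ => ‖a m‖ * (ρ : ℝ) ^ m) (μ := volume) (a := 0) (b := 2 * π)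
    (fun m => by fun_prop) (fun m => .of_forall fun θ _ => by simp [norm_circleMap_zero, norm_exp])
    (.of_forall fun θ _ => hsummable) intervalIntegrable_const
    (.of_forall fun θ _ => (hseries θ).mul_right _)
  simpa only [hterm, intervalIntegral.integral_const_mul, integral_exp_intCast_mul_mul_I] using key

theorem integral_circleMap_mul_exp_neg (hp : HasFPowerSeriesOnBall f (ofScalars ℂ a) 0 R)
    (hρ : (ρ : ℝ≥0∞) < R) (n : ℕ) :
    ∫ θ in (0 : ℝ)..2 * π, f (circleMap 0 ρ θ) * exp (-n * θ * I) = 2 * π * a n * ρ ^ n := by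
  have key := hp.hasSum_integral_circleMap_mul_exp hρ (-n)
  have hcoeff : (fun m : ℕ => a m * ρ ^ m * if (m : ℤ) + -n = 0 then (2 * π : ℂ) else 0) =
      fun m => if m = n then 2 * π * a n * ρ ^ n else 0 := by
    ext m
    by_cases hm : m = n
    · rw [if_pos (by omega), if_pos hm, hm]; ring
    · rw [if_neg (by omega), if_neg hm, mul_zero]
  rw [hcoeff] at key
  push_cast at key
  exact key.unique (hasSum_ite_eq n _)

theorem integral_circleMap_mul_exp_of_pos (hp : HasFPowerSeriesOnBall f (ofScalars ℂ a) 0 R)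
    (hρ : (ρ : ℝ≥0∞) < R) {n : ℕ} (hn : 0 < n) :
    ∫ θ in (0 : ℝ)..2 * π, f (circleMap 0 ρ θ) * exp (n * θ * I) = 0 := by
  have key := hp.hasSum_integral_circleMap_mul_exp hρ n
  have hcoeff : (fun m : ℕ => a m * ρ ^ m * if (m : ℤ) + n = 0 then (2 * π : ℂ) else 0) = 0 := by
    ext m
    rw [if_neg (by omega), mul_zero, Pi.zero_apply]
  rw [hcoeff] at key
  push_cast at key
  exact key.unique hasSum_zero

theorem integral_re_circleMap_mul_exp_neg (hp : HasFPowerSeriesOnBall f (ofScalars ℂ a) 0 R)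
    (hρ : (ρ : ℝ≥0∞) < R) {n : ℕ} (hn : 0 < n) :
    ∫ θ in (0 : ℝ)..2 * π, ((f (circleMap 0 ρ θ)).re : ℂ) * exp (-n * θ * I) =
      π * a n * ρ ^ n := by
  have hF := hp.continuous_comp_circleMap hρ
  have hpt (θ : ℝ) : ((f (circleMap 0 ρ θ)).re : ℂ) * exp (-n * θ * I) =
      (f (circleMap 0 ρ θ) * exp (-n * θ * I) +
        conj (f (circleMap 0 ρ θ) * exp (n * θ * I))) / 2 := by
    rw [map_mul, ← exp_conj, re_eq_add_conj]
    simp only [neg_mul, map_mul, map_natCast, conj_ofReal, conj_I, mul_neg]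
    ring
  have hcont (k : ℂ) : Continuous fun θ : ℝ => f (circleMap 0 ρ θ) * exp (k * θ * I) :=
    hF.mul (by fun_prop)
  simp_rw [hpt]
  rw [intervalIntegral.integral_div, intervalIntegral.integral_add
    ((hcont _).intervalIntegrable _ _) ((continuous_conj.comp' (hcont _)).intervalIntegrable _ _),
    intervalIntegral.intervalIntegral_conj, hp.integral_circleMap_mul_exp_neg hρ,
    hp.integral_circleMap_mul_exp_of_pos hρ hn, map_zero, add_zero]
  ring

theorem integral_re_circleMap (hp : HasFPowerSeriesOnBall f (ofScalars ℂ a) 0 R)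
    (hρ : (ρ : ℝ≥0∞) < R) :
    ∫ θ in (0 : ℝ)..2 * π, (f (circleMap 0 ρ θ)).re = 2 * π * (a 0).re := by
  have hre := intervalIntegral.intervalIntegral_re
    ((hp.continuous_comp_circleMap hρ).intervalIntegrable (μ := volume) 0 (2 * π))
  simp only [RCLike.re_to_complex] at hre
  rw [hre]
  simpa using congrArg re (hp.integral_circleMap_mul_exp_neg hρ 0)

theorem norm_coeff_mul_pow_le_of_re_le (hp : HasFPowerSeriesOnBall f (ofScalars ℂ a) 0 R)
    (hρ : (ρ : ℝ≥0∞) < R) {M : ℝ} (hM : ∀ θ, (f (circleMap 0 ρ θ)).re ≤ M) {n : ℕ}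
    (hn : 0 < n) : ‖a n‖ * ρ ^ n ≤ 2 * (M - (a 0).re) := by
  have hre : Continuous fun θ => (f (circleMap 0 ρ θ)).re :=
    continuous_re.comp (hp.continuous_comp_circleMap hρ)
  set u := fun θ : ℝ => M - (f (circleMap 0 ρ θ)).re
  have hexp : ∫ θ in (0 : ℝ)..2 * π, exp (-n * θ * I) = 0 := by
    have := integral_exp_intCast_mul_mul_I (-n)
    push_cast at this
    rwa [if_neg (by omega)] at this
  have hfourier : ∫ θ in (0 : ℝ)..2 * π, (u θ : ℂ) * exp (-n * θ * I) = -(π * a n * ρ ^ n) := by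
    simp only [u, ofReal_sub, sub_mul]
    have hint : IntervalIntegrable (fun θ : ℝ => ((f (circleMap 0 ρ θ)).re : ℂ) *
        exp (-n * θ * I)) volume 0 (2 * π) :=
      ((continuous_ofReal.comp' hre).mul (by fun_prop)).intervalIntegrable _ _
    rw [intervalIntegral.integral_sub (Continuous.intervalIntegrable (by fun_prop) _ _) hint,
      intervalIntegral.integral_const_mul, hexp,
      hp.integral_re_circleMap_mul_exp_neg hρ hn]
    simp
  have hmean : ∫ θ in (0 : ℝ)..2 * π, u θ = 2 * π * (M - (a 0).re) := by
    rw [intervalIntegral.integral_sub intervalIntegrable_const (hre.intervalIntegrable _ _),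
      hp.integral_re_circleMap hρ, intervalIntegral.integral_const, sub_zero, smul_eq_mul]
    ring
  have hbound : π * (‖a n‖ * ρ ^ n) ≤ 2 * π * (M - (a 0).re) := calc
    π * (‖a n‖ * ρ ^ n) = ‖∫ θ in (0 : ℝ)..2 * π, (u θ : ℂ) * exp (-n * θ * I)‖ := by
      rw [hfourier, norm_neg]
      simp [Real.pi_pos.le, abs_of_nonneg, mul_assoc]
    _ ≤ ∫ θ in (0 : ℝ)..2 * π, ‖(u θ : ℂ) * exp (-n * θ * I)‖ :=
      intervalIntegral.norm_integral_le_integral_norm (by positivity)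
    _ = ∫ θ in (0 : ℝ)..2 * π, u θ := by
      refine intervalIntegral.integral_congr fun θ _ => ?_
      rw [norm_mul, norm_real, Real.norm_of_nonneg (sub_nonneg.2 (hM θ)), norm_exp]
      simp [u]
    _ = 2 * π * (M - (a 0).re) := hmean
  nlinarith [Real.pi_pos]

end HasFPowerSeriesOnBall

theorem HasFPowerSeriesOnBall.norm_coeff_le_of_re_le {f : ℂ → ℂ} {a : ℕ → ℂ} {M : ℝ}
    (hp : HasFPowerSeriesOnBall f (ofScalars ℂ a) 0 1) (hM : ∀ z ∈ ball (0 : ℂ) 1, (f z).re ≤ M)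
    {n : ℕ} (hn : 0 < n) : ‖a n‖ ≤ 2 * (M - (a 0).re) := by
  have hcircle : ∀ ρ ∈ Set.Ico (0 : ℝ) 1, ‖a n‖ * ρ ^ n ≤ 2 * (M - (a 0).re) := by
    rintro ρ ⟨hρ0, hρ1⟩
    have hρ : ((ρ.toNNReal : ℝ≥0) : ℝ≥0∞) < 1 := by simpa using hρ1
    have hmem (θ : ℝ) : circleMap 0 ρ.toNNReal θ ∈ ball (0 : ℂ) 1 := by
      simpa [norm_circleMap_zero, Real.coe_toNNReal _ hρ0, abs_of_nonneg hρ0] using hρ1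
    simpa [hρ0] using hp.norm_coeff_mul_pow_le_of_re_le hρ (fun θ => hM _ (hmem θ)) hn
  have hlim : Tendsto (fun ρ : ℝ => ‖a n‖ * ρ ^ n) (𝓝[<] 1) (𝓝 ‖a n‖) := by
    have hcont : Continuous fun ρ : ℝ => ‖a n‖ * ρ ^ n := by fun_prop
    exact (hcont.tendsto' 1 _ (by simp)).mono_left nhdsWithin_le_nhds
  exact le_of_tendsto hlim (mem_of_superset (Ico_mem_nhdsLT zero_lt_one) hcircle)

theorem tsum_norm_mul_pow_le {E : Type*} [SeminormedAddCommGroup E] {a : ℕ → E} {C r : ℝ}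
    (hC : ∀ n, 0 < n → ‖a n‖ ≤ C) (hr0 : 0 ≤ r) (hr1 : r < 1) :
    ∑' n, ‖a n‖ * r ^ n ≤ ‖a 0‖ + C * r / (1 - r) := by
  have hgeom : HasSum (fun n => C * r ^ (n + 1)) (C * r / (1 - r)) := by
    simpa [pow_succ', mul_assoc, div_eq_mul_inv] using
      (hasSum_geometric_of_lt_one hr0 hr1).mul_left (C * r)
  have hle (n : ℕ) : ‖a (n + 1)‖ * r ^ (n + 1) ≤ C * r ^ (n + 1) :=
    mul_le_mul_of_nonneg_right (hC _ n.succ_pos) (by positivity)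
  have htail : Summable fun n => ‖a (n + 1)‖ * r ^ (n + 1) :=
    .of_nonneg_of_le (fun n => by positivity) hle hgeom.summable
  have hsum : Summable fun n => ‖a n‖ * r ^ n := (summable_nat_add_iff 1).mp htail
  have htail_le : ∑' n, ‖a (n + 1)‖ * r ^ (n + 1) ≤ C * r / (1 - r) :=
    (htail.tsum_le_tsum hle hgeom.summable).trans_eq hgeom.tsum_eq
  rw [hsum.tsum_eq_zero_add, pow_zero, mul_one]
  linarith

/-- If `f(z) = Σ aₙ zⁿ` is analytic in the unit disk with `Re f(z) < 1` there and
`a₀ = f(0) ∈ [0,1)` real, then for every `0 ≤ r ≤ 1/3` one has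
`Σ |aₙ| rⁿ ≤ a₀ + 2(1−a₀) r/(1−r) ≤ 1`. -/
theorem bohr_re_lt_one
    (f : ℂ → ℂ) (a : ℕ → ℂ) (a₀ : ℝ)
    (hf : ∀ z ∈ ball (0 : ℂ) 1, HasSum (fun n : ℕ => a n * z ^ n) (f z))
    (hre : ∀ z ∈ ball (0 : ℂ) 1, (f z).re < 1)
    (ha₀ : a 0 = (a₀ : ℂ)) (h0 : 0 ≤ a₀) (h1 : a₀ < 1)
    (r : ℝ) (hr0 : 0 ≤ r) (hr : r ≤ 1 / 3) :
    (∑' n : ℕ, ‖a n‖ * r ^ n) ≤ a₀ + 2 * (1 - a₀) * r / (1 - r) ∧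
      a₀ + 2 * (1 - a₀) * r / (1 - r) ≤ 1 := by
  have hp : HasFPowerSeriesOnBall f (ofScalars ℂ a) 0 1 := by
    simpa using hasFPowerSeriesOnBall_ofScalars_of_hasSum one_pos (by simpa using hf)
  have hcoeff (n : ℕ) (hn : 0 < n) : ‖a n‖ ≤ 2 * (1 - a₀) := by
    simpa [ha₀] using hp.norm_coeff_le_of_re_le (fun z hz => (hre z hz).le) hn
  have hbohr := tsum_norm_mul_pow_le hcoeff hr0 (by linarith)
  rw [ha₀, norm_real, Real.norm_of_nonneg h0] at hbohr
  refine ⟨hbohr, ?_⟩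
  have hgeom : 2 * r / (1 - r) ≤ 1 := by
    rw [div_le_one (by linarith)]; linarith
  calc a₀ + 2 * (1 - a₀) * r / (1 - r) = a₀ + (1 - a₀) * (2 * r / (1 - r)) := by ring
    _ ≤ a₀ + (1 - a₀) * 1 := by gcongr
    _ = 1 := by ring
end

section
/- Let g be analytic and univalent in the unit disk D with g(D) a convex domain, let f(z) = Σ_{n=0}^∞ a_n z^n be analytic in D with f subordinate to g, and let λ = dist(g(0), ∂g(D)) ≤ 1. Then Σ_{n=1}^∞ |a_n| r^n + (1/(2−λ) + r/(1−r)) · Σ_{n=1}^∞ |a_n|² r^{2n} ≤ λ holds for all r with 0 ≤ r ≤ r_*, where r_* ≈ 0.24683 is the unique root in (0,1) of 3r³ − 5r² − 3r + 1 = 0. -/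
/-!
For every boundary point `p` of the convex domain `Ω = g(𝔻)`, a supporting line at `p` puts
`f(𝔻) ⊆ Ω` into a half-plane at distance `|p - f(0)|` from `f(0) = g(0)`, so Carathéodory's
inequality for functions with bounded real part gives `|aₙ| ≤ 2 |p - g(0)|` for `n ≥ 1`, hence
`|aₙ| ≤ 2λ`. The boundary is nonempty because `Ω ≠ ℂ`: otherwise the inverse of `g` would be a
bounded nonconstant entire function. Bounding both series by geometric ones then reduces the
claim to a rational inequality in `λ` and `r`, which for `λ ≤ 1` holds as long as
`3r³ - 5r² - 3r + 1 ≥ 0`.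
-/

open Metric Set Filter Topology Complex ComplexConjugate intervalIntegral Function
open scoped Real
open MeasureTheory (volume)

theorem integral_exp_int_mul_I (m : ℤ) :
    ∫ t in (0 : ℝ)..2 * π, exp (m * t * I) = if m = 0 then (2 * π : ℂ) else 0 := by
  rcases eq_or_ne m 0 with rfl | hm
  · simp
  have hmI : (m : ℂ) * I ≠ 0 := by simp [hm]
  have hperiod : exp ((m : ℂ) * I * (2 * π)) = 1 := by
    rw [show (m : ℂ) * I * (2 * π) = m * (2 * π * I) by ring]
    exact exp_int_mul_two_pi_mul_I m
  simp_rw [mul_right_comm _ _ I]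
  rw [integral_exp_mul_complex hmI, if_neg hm]
  simp [hperiod]

theorem norm_circleMap_zero_pow_mul {c : ℂ} {ρ : ℝ} (hρ : 0 ≤ ρ) (t : ℝ) (k : ℕ) :
    ‖c * circleMap 0 ρ t ^ k‖ = ‖c‖ * ρ ^ k := by
  rw [norm_mul, norm_pow, norm_circleMap_zero, abs_of_nonneg hρ]

theorem integral_tsum_mul_circleMap_pow_mul_exp {c : ℕ → ℂ} {ρ : ℝ} (hρ : 0 ≤ ρ)
    (hc : Summable fun k => ‖c k‖ * ρ ^ k) (m : ℤ) :
    ∫ t in (0 : ℝ)..2 * π, (∑' k, c k * circleMap 0 ρ t ^ k) * exp (-(m * t * I)) =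
      if 0 ≤ m then 2 * π * c m.toNat * ρ ^ m.toNat else 0 := by
  have hterm : ∀ k (t : ℝ), c k * circleMap 0 ρ t ^ k * exp (-(m * t * I)) =
      c k * ρ ^ k * exp (((k - m : ℤ) : ℂ) * t * I) := by
    intro k t
    rw [circleMap_zero, mul_pow, ← Complex.exp_nat_mul, mul_assoc, mul_assoc, ← exp_add]
    push_cast
    ring_nf
  have hexp : ∀ t : ℝ, ‖exp (-(m * t * I))‖ = 1 := fun t => by simp [Complex.norm_exp]
  have hsummable : ∀ t : ℝ, Summable fun k => c k * circleMap 0 ρ t ^ k := fun t =>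
    .of_norm (by simpa only [norm_circleMap_zero_pow_mul hρ] using hc)
  have hsum := intervalIntegral.hasSum_integral_of_dominated_convergence
    (f := fun t => (∑' k, c k * circleMap 0 ρ t ^ k) * exp (-(m * t * I)))
    (μ := volume) (a := 0) (b := 2 * π)
    (F := fun k t => c k * circleMap 0 ρ t ^ k * exp (-(m * t * I)))
    (fun k _ => ‖c k‖ * ρ ^ k)
    (fun k => by fun_prop)
    (fun k => .of_forall fun t _ => by
      rw [norm_mul, norm_circleMap_zero_pow_mul hρ, hexp, mul_one])
    (.of_forall fun _ _ => hc) intervalIntegrable_const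
    (.of_forall fun t _ => (hsummable t).hasSum.mul_right _)
  have hcoeff : ∀ k : ℕ, ∫ t in (0 : ℝ)..2 * π, c k * circleMap 0 ρ t ^ k * exp (-(m * t * I)) =
      if (k : ℤ) = m then 2 * π * c k * ρ ^ k else 0 := by
    intro k
    simp_rw [hterm k, intervalIntegral.integral_const_mul, integral_exp_int_mul_I, sub_eq_zero]
    split_ifs <;> ring
  rw [← hsum.tsum_eq, tsum_congr hcoeff]
  split_ifs with hm
  · rw [tsum_eq_single m.toNat fun k hk => if_neg (by omega), if_pos (by omega)]
  · simp [show ∀ k : ℕ, (k : ℤ) ≠ m by omega]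

theorem summable_norm_mul_pow_of_summable_mul_pow {c : ℕ → ℂ} {z : ℂ} {ρ : ℝ}
    (hz : Summable fun k => c k * z ^ k) (hρ : 0 ≤ ρ) (hρz : ρ < ‖z‖) :
    Summable fun k => ‖c k‖ * ρ ^ k := by
  have hz0 : 0 < ‖z‖ := hρ.trans_lt hρz
  have hbound : (fun k => ‖c k * z ^ k‖ * (ρ / ‖z‖) ^ k) =O[atTop] fun k => 1 * (ρ / ‖z‖) ^ k :=
    (hz.tendsto_atTop_zero.norm.isBigO_one ℝ).mul (Asymptotics.isBigO_refl _ _)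
  have hgeom := summable_geometric_of_lt_one (div_nonneg hρ hz0.le) ((div_lt_one hz0).2 hρz)
  refine summable_of_isBigO_nat (by simpa using hgeom) (hbound.congr_left fun k => ?_)
  rw [norm_mul, norm_pow, div_pow, mul_assoc, mul_div_cancel₀ _ (pow_pos hz0 k).ne']

theorem continuous_tsum_mul_circleMap_pow {c : ℕ → ℂ} {ρ : ℝ} (hρ : 0 ≤ ρ)
    (hc : Summable fun k => ‖c k‖ * ρ ^ k) :
    Continuous fun t => ∑' k, c k * circleMap 0 ρ t ^ k :=
  continuous_tsum (fun k => by fun_prop) hc fun k t => (norm_circleMap_zero_pow_mul hρ t k).le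

/-- With `G` the series on the circle: for `n ≠ 0`, `conj G` has no `n`-th Fourier coefficient,
so that of `Re G = (G + conj G) / 2` is half that of `G`. -/
theorem integral_re_tsum_mul_circleMap_pow_mul_exp {c : ℕ → ℂ} {ρ : ℝ} (hρ : 0 ≤ ρ)
    (hc : Summable fun k => ‖c k‖ * ρ ^ k) {n : ℕ} (hn : n ≠ 0) :
    ∫ t in (0 : ℝ)..2 * π, ((∑' k, c k * circleMap 0 ρ t ^ k).re : ℂ) * exp (-(n * t * I)) =
      π * c n * ρ ^ n := by
  set G : ℝ → ℂ := fun t => ∑' k, c k * circleMap 0 ρ t ^ k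
  have hG : Continuous G := continuous_tsum_mul_circleMap_pow hρ hc
  have h_pos : ∫ t in (0 : ℝ)..2 * π, G t * exp (-(n * t * I)) = 2 * π * c n * ρ ^ n := by
    simpa using integral_tsum_mul_circleMap_pow_mul_exp hρ hc n
  have h_neg : ∫ t in (0 : ℝ)..2 * π, G t * exp (n * t * I) = 0 := by
    simpa [hn] using integral_tsum_mul_circleMap_pow_mul_exp hρ hc (-n)
  have hint : ∀ φ : ℝ → ℂ, Continuous φ → IntervalIntegrable φ volume 0 (2 * π) :=
    fun φ hφ => hφ.intervalIntegrable _ _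
  have h_conj : ∫ t in (0 : ℝ)..2 * π, conj (G t * exp (n * t * I)) = 0 := by
    have := (conjCLE : ℂ →L[ℝ] ℂ).intervalIntegral_comp_comm
      (hint (fun t => G t * exp (n * t * I)) (by fun_prop))
    simpa [h_neg] using this
  have hsplit : ∀ t : ℝ, ((G t).re : ℂ) * exp (-(n * t * I)) =
      (G t * exp (-(n * t * I)) + conj (G t * exp (n * t * I))) / 2 := by
    intro t
    rw [map_mul, ← exp_conj]
    simp [re_eq_add_conj]
    ring
  change ∫ t in (0 : ℝ)..2 * π, ((G t).re : ℂ) * exp (-(n * t * I)) = _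
  simp_rw [hsplit]
  rw [integral_div, integral_add (hint _ (by fun_prop)) (hint _ (by fun_prop)), h_pos, h_conj]
  ring

/-- `π cₙ ρⁿ` is the `n`-th Fourier coefficient of `Re G - M ≤ 0`, so its norm is at most the
integral of `M - Re G`, which is `2π (M - Re c₀)`. -/
theorem norm_coeff_mul_pow_le_of_re_le {c : ℕ → ℂ} {ρ M : ℝ} (hρ : 0 ≤ ρ)
    (hc : Summable fun k => ‖c k‖ * ρ ^ k)
    (hre : ∀ t : ℝ, (∑' k, c k * circleMap 0 ρ t ^ k).re ≤ M) {n : ℕ} (hn : n ≠ 0) :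
    ‖c n‖ * ρ ^ n ≤ 2 * (M - (c 0).re) := by
  set G : ℝ → ℂ := fun t => ∑' k, c k * circleMap 0 ρ t ^ k
  have hG : Continuous G := continuous_tsum_mul_circleMap_pow hρ hc
  have h_exp : ∫ t in (0 : ℝ)..2 * π, exp (-(n * t * I)) = 0 := by
    simpa [hn] using integral_exp_int_mul_I (-n)
  have h_zero : ∫ t in (0 : ℝ)..2 * π, G t = 2 * π * c 0 := by
    simpa using integral_tsum_mul_circleMap_pow_mul_exp hρ hc 0
  have hint : ∀ φ : ℝ → ℂ, Continuous φ → IntervalIntegrable φ volume 0 (2 * π) :=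
    fun φ hφ => hφ.intervalIntegrable _ _
  have h_re_zero : ∫ t in (0 : ℝ)..2 * π, (G t).re = 2 * π * (c 0).re := by
    have := reCLM.intervalIntegral_comp_comm (hint G hG)
    simp only [reCLM_apply, h_zero] at this
    simpa using this
  have h_coeff : ∫ t in (0 : ℝ)..2 * π, (((G t).re - M : ℝ) : ℂ) * exp (-(n * t * I)) =
      π * c n * ρ ^ n := by
    simp_rw [ofReal_sub, sub_mul]
    rw [integral_sub (hint _ (by fun_prop)) (hint _ (by fun_prop)), integral_const_mul, h_exp,
      integral_re_tsum_mul_circleMap_pow_mul_exp hρ hc hn, mul_zero, sub_zero]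
  have h_bound : ‖(π : ℂ) * c n * ρ ^ n‖ ≤ 2 * π * (M - (c 0).re) := calc
    _ ≤ ∫ t in (0 : ℝ)..2 * π, ‖(((G t).re - M : ℝ) : ℂ) * exp (-(n * t * I))‖ := by
      rw [← h_coeff]
      exact norm_integral_le_integral_norm (by positivity)
    _ = ∫ t in (0 : ℝ)..2 * π, (M - (G t).re) := by
      refine integral_congr fun t _ => ?_
      rw [norm_mul, norm_real, Real.norm_eq_abs, abs_of_nonpos (sub_nonpos.2 (hre t))]
      simp [Complex.norm_exp, G]
    _ = 2 * π * (M - (c 0).re) := by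
      rw [integral_sub (g := fun t => (G t).re) intervalIntegrable_const
        ((continuous_re.comp hG).intervalIntegrable _ _), h_re_zero]
      simp
      ring
  have hπ := Real.pi_pos
  rw [norm_mul, norm_mul, norm_pow, norm_real, norm_real, Real.norm_eq_abs, Real.norm_eq_abs,
    abs_of_pos hπ, abs_of_nonneg hρ] at h_bound
  nlinarith

/-- Carathéodory's coefficient inequality. -/
theorem norm_coeff_le_of_re_le {c : ℕ → ℂ} {F : ℂ → ℂ} {M : ℝ}
    (hF : ∀ z ∈ ball (0 : ℂ) 1, HasSum (fun k => c k * z ^ k) (F z))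
    (hre : ∀ z ∈ ball (0 : ℂ) 1, (F z).re ≤ M) {n : ℕ} (hn : n ≠ 0) :
    ‖c n‖ ≤ 2 * (M - (c 0).re) := by
  have h_radius : ∀ ρ ∈ Ioo (0 : ℝ) 1, ‖c n‖ * ρ ^ n ≤ 2 * (M - (c 0).re) := by
    rintro ρ ⟨hρ0, hρ1⟩
    have hmem : ∀ t : ℝ, circleMap 0 ρ t ∈ ball (0 : ℂ) 1 := fun t => by
      simpa [norm_circleMap_zero, abs_of_pos hρ0] using hρ1
    have hσ : (((1 + ρ) / 2 : ℝ) : ℂ) ∈ ball (0 : ℂ) 1 := by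
      rw [mem_ball_zero_iff, norm_real, Real.norm_eq_abs, abs_of_pos (by positivity)]
      linarith
    have hc : Summable fun k => ‖c k‖ * ρ ^ k :=
      summable_norm_mul_pow_of_summable_mul_pow (hF _ hσ).summable hρ0.le (by
        rw [norm_real, Real.norm_eq_abs, abs_of_pos (by positivity)]
        linarith)
    exact norm_coeff_mul_pow_le_of_re_le hρ0.le hc
      (fun t => (hF _ (hmem t)).tsum_eq ▸ hre _ (hmem t)) hn
  have hlim : Tendsto (fun ρ : ℝ => ‖c n‖ * ρ ^ n) (𝓝[<] 1) (𝓝 ‖c n‖) := by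
    have := ((continuous_pow n).tendsto (1 : ℝ)).const_mul ‖c n‖
    simpa using this.mono_left nhdsWithin_le_nhds
  exact le_of_tendsto hlim (eventually_of_mem (Ioo_mem_nhdsLT one_pos) h_radius)

theorem Convex.exists_norm_eq_one_re_mul_sub_lt_dist {Ω : Set ℂ} (hconv : Convex ℝ Ω)
    (hopen : IsOpen Ω) {c p : ℂ} (hc : c ∈ Ω) (hp : p ∉ Ω) :
    ∃ u : ℂ, ‖u‖ = 1 ∧ ∀ w ∈ Ω, (u * (w - c)).re < dist c p := by
  obtain ⟨φ, hφ⟩ := RCLike.geometric_hahn_banach_open_point (𝕜 := ℂ) hconv hopen hp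
  have hφ_apply : ∀ w, φ w = φ 1 * w := fun w => by
    rw [mul_comm, ← smul_eq_mul, ← φ.map_smul, smul_eq_mul, mul_one]
  have hφ1 : φ 1 ≠ 0 := fun h0 => by
    have := hφ c hc
    rw [hφ_apply c, hφ_apply p, h0] at this
    simp at this
  have hnorm : 0 < ‖φ 1‖ := norm_pos_iff.2 hφ1
  refine ⟨φ 1 / ‖φ 1‖, by simp [hnorm.ne'], fun w hw => ?_⟩
  have hlt : (φ 1 * (w - c)).re < (φ 1 * (p - c)).re := by
    have := hφ w hw
    rw [hφ_apply w, hφ_apply p] at this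
    simp only [mul_sub, sub_re]
    exact sub_lt_sub_right this _
  calc (φ 1 / ‖φ 1‖ * (w - c)).re < (φ 1 / ‖φ 1‖ * (p - c)).re := by
        simp only [div_mul_eq_mul_div, div_ofReal_re]
        exact div_lt_div_of_pos_right hlt hnorm
    _ ≤ ‖φ 1 / ‖φ 1‖ * (p - c)‖ := re_le_norm _
    _ = dist c p := by rw [norm_mul, norm_div, norm_real, norm_norm, div_self hnorm.ne', one_mul,
        dist_comm, dist_eq]

theorem norm_coeff_le_two_mul_dist_of_mapsTo {a : ℕ → ℂ} {f : ℂ → ℂ} {Ω : Set ℂ}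
    (hconv : Convex ℝ Ω) (hopen : IsOpen Ω)
    (hf : ∀ z ∈ ball (0 : ℂ) 1, HasSum (fun n => a n * z ^ n) (f z))
    (hmaps : MapsTo f (ball 0 1) Ω) {p : ℂ} (hp : p ∉ Ω) {n : ℕ} (hn : n ≠ 0) :
    ‖a n‖ ≤ 2 * dist (f 0) p := by
  have h0 : (0 : ℂ) ∈ ball (0 : ℂ) 1 := mem_ball_self one_pos
  have ha0 : f 0 = a 0 := (hf 0 h0).unique (by
    simpa using hasSum_single (f := fun n => a n * (0 : ℂ) ^ n) 0 fun n hn => by simp [hn])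
  obtain ⟨u, hu, hhalf⟩ := hconv.exists_norm_eq_one_re_mul_sub_lt_dist hopen (hmaps h0) hp
  have hF : ∀ z ∈ ball (0 : ℂ) 1, HasSum (fun k => u * a k * z ^ k) (u * f z) := fun z hz => by
    simpa only [mul_assoc] using (hf z hz).mul_left u
  have hre : ∀ z ∈ ball (0 : ℂ) 1, (u * f z).re ≤ (u * a 0).re + dist (f 0) p := fun z hz => by
    have := hhalf (f z) (hmaps hz)
    rw [mul_sub, sub_re] at this
    rw [← ha0]
    linarith
  simpa [hu] using norm_coeff_le_of_re_le hF hre hn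

theorem norm_coeff_le_two_mul_infDist_frontier {a : ℕ → ℂ} {f : ℂ → ℂ} {Ω : Set ℂ}
    (hconv : Convex ℝ Ω) (hopen : IsOpen Ω) (hΩ : Ω ≠ univ)
    (hf : ∀ z ∈ ball (0 : ℂ) 1, HasSum (fun n => a n * z ^ n) (f z))
    (hmaps : MapsTo f (ball 0 1) Ω) {n : ℕ} (hn : n ≠ 0) :
    ‖a n‖ ≤ 2 * infDist (f 0) (frontier Ω) := by
  have hfront : (frontier Ω).Nonempty :=
    nonempty_frontier_iff.2 ⟨⟨f 0, hmaps (mem_ball_self one_pos)⟩, hΩ⟩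
  rw [← div_le_iff₀' two_pos, le_infDist hfront]
  intro p hp
  rw [hopen.frontier_eq] at hp
  rw [div_le_iff₀' two_pos]
  exact norm_coeff_le_two_mul_dist_of_mapsTo hconv hopen hf hmaps hp.2 hn

theorem mapsTo_ball_of_norm_le {ω : ℂ → ℂ} {U : Set ℂ} {R : ℝ} (hω : DifferentiableOn ℂ ω U)
    (hU : IsOpen U) (hUc : IsPreconnected U) {z₀ : ℂ} (hz₀ : z₀ ∈ U) (h₀ : ‖ω z₀‖ < R)
    (hle : ∀ z ∈ U, ‖ω z‖ ≤ R) : MapsTo ω U (ball 0 R) := by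
  intro z hz
  rw [mem_ball_zero_iff]
  refine (hle z hz).lt_of_ne fun heq => h₀.ne ?_
  have hmax : IsMaxOn (norm ∘ ω) U z := fun y hy => by simpa [heq] using hle y hy
  rw [eqOn_of_isPreconnected_of_isMaxOn_norm hUc hU hω hz hmax hz₀, const_apply, heq]

section Univalent

variable {g : ℂ → ℂ} {U : Set ℂ}

theorem isOpen_image_of_injOn (hg : DifferentiableOn ℂ g U) (hU : IsOpen U)
    (hUc : IsPreconnected U) (hUn : U.Nontrivial) (hinj : InjOn g U) {s : Set ℂ} (hs : s ⊆ U)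
    (hso : IsOpen s) : IsOpen (g '' s) := by
  rcases (hg.analyticOnNhd hU).is_constant_or_isOpen hUc with ⟨w, hw⟩ | hopen
  · obtain ⟨x, hx, y, hy, hxy⟩ := hUn
    exact absurd (hinj hx hy ((hw x hx).trans (hw y hy).symm)) hxy
  · exact hopen s hs hso

theorem eventually_deriv_ne_zero_of_injOn (hg : DifferentiableOn ℂ g U)
    (hU : IsOpen U) (hUc : IsPreconnected U) (hUn : U.Nontrivial) (hinj : InjOn g U) {z₀ : ℂ}
    (hz₀ : z₀ ∈ U) : ∀ᶠ z in 𝓝[≠] z₀, deriv g z ≠ 0 := by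
  have hderiv : AnalyticOnNhd ℂ (deriv g) U := (hg.analyticOnNhd hU).deriv
  refine (hderiv z₀ hz₀).eventually_eq_zero_or_eventually_ne_zero.resolve_left fun hzero => ?_
  obtain ⟨x, hx, y, hy, hxy⟩ := hUn
  exact hxy (hinj hx hy (hU.is_const_of_deriv_eq_zero hUc hg
    (hderiv.eqOn_zero_of_preconnected_of_eventuallyEq_zero hUc hz₀ hzero) hx hy))

theorem continuous_invFunOn_of_injOn (hg : DifferentiableOn ℂ g U)
    (hU : IsOpen U) (hUc : IsPreconnected U) (hUn : U.Nontrivial) (hinj : InjOn g U)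
    (hsurj : g '' U = univ) : Continuous (invFunOn g U) := by
  refine continuous_def.2 fun V hV => ?_
  convert isOpen_image_of_injOn hg hU hUc hUn hinj inter_subset_right (hV.inter hU) using 1
  ext w
  have hw : w ∈ g '' U := hsurj ▸ mem_univ w
  constructor
  · exact fun hV => ⟨_, ⟨hV, invFunOn_mem hw⟩, invFunOn_eq hw⟩
  · rintro ⟨z, ⟨hzV, hzU⟩, rfl⟩
    rwa [mem_preimage, hinj.leftInvOn_invFunOn hzU]

theorem differentiable_invFunOn_of_injOn (hg : DifferentiableOn ℂ g U)
    (hU : IsOpen U) (hUc : IsPreconnected U) (hUn : U.Nontrivial) (hinj : InjOn g U)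
    (hsurj : g '' U = univ) : Differentiable ℂ (invFunOn g U) := by
  set h := invFunOn g U
  have himage : ∀ w, w ∈ g '' U := fun w => hsurj ▸ mem_univ w
  have hmem : ∀ w, h w ∈ U := fun w => invFunOn_mem (himage w)
  have hright : ∀ w, g (h w) = w := fun w => invFunOn_eq (himage w)
  have hcont : Continuous h := continuous_invFunOn_of_injOn hg hU hUc hUn hinj hsurj
  have hdiff_of_deriv : ∀ w, deriv g (h w) ≠ 0 → DifferentiableAt ℂ h w := fun w hw =>
    (HasDerivAt.of_local_left_inverse hcont.continuousAt
      (hg.differentiableAt (hU.mem_nhds (hmem w))).hasDerivAt hw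
      (.of_forall hright)).differentiableAt
  -- the critical points of `g` are isolated, so `h` is holomorphic on a punctured neighbourhood
  -- of every point, and continuous there: a removable singularity
  intro w
  have hpunct : Tendsto h (𝓝[≠] w) (𝓝[≠] (h w)) :=
    tendsto_nhdsWithin_of_tendsto_nhds_of_eventually_within _
      ((hcont.tendsto w).mono_left nhdsWithin_le_nhds)
      (eventually_nhdsWithin_of_forall fun y hy hyw => hy (by
        rw [mem_singleton_iff, ← hright y, mem_singleton_iff.1 hyw, hright]))
  refine (analyticAt_of_differentiable_on_punctured_nhds_of_continuousAt ?_
    hcont.continuousAt).differentiableAt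
  exact (hpunct.eventually (eventually_deriv_ne_zero_of_injOn hg hU hUc hUn hinj (hmem w))).mono
    fun y hy => hdiff_of_deriv y hy

theorem image_ne_univ_of_injOn (hg : DifferentiableOn ℂ g U) (hU : IsOpen U)
    (hUc : IsPreconnected U) (hUn : U.Nontrivial) (hUb : Bornology.IsBounded U)
    (hinj : InjOn g U) : g '' U ≠ univ := by
  intro hsurj
  obtain ⟨x, hx, y, hy, hxy⟩ := hUn
  have hbdd : Bornology.IsBounded (range (invFunOn g U)) :=
    hUb.subset (range_subset_iff.2 fun w => invFunOn_mem (hsurj.symm ▸ mem_univ w : w ∈ g '' U))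
  have := (differentiable_invFunOn_of_injOn hg hU hUc ⟨x, hx, y, hy, hxy⟩ hinj hsurj
    ).apply_eq_apply_of_bounded hbdd (g x) (g y)
  rw [hinj.leftInvOn_invFunOn hx, hinj.leftInvOn_invFunOn hy] at this
  exact hxy this

end Univalent

theorem tsum_mul_pow_succ_le {b : ℕ → ℝ} {M q : ℝ} (hb0 : ∀ n, 0 ≤ b n) (hbM : ∀ n, b n ≤ M)
    (hq0 : 0 ≤ q) (hq1 : q < 1) : ∑' n, b n * q ^ (n + 1) ≤ M * (q / (1 - q)) := by
  have hgeom : HasSum (fun n => M * q ^ (n + 1)) (M * (q / (1 - q))) := by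
    rw [show M * (q / (1 - q)) = M * q * (1 - q)⁻¹ by ring]
    exact ((hasSum_geometric_of_lt_one hq0 hq1).mul_left (M * q)).congr_fun fun n => by ring
  have hle : ∀ n, b n * q ^ (n + 1) ≤ M * q ^ (n + 1) := fun n =>
    mul_le_mul_of_nonneg_right (hbM n) (by positivity)
  exact hgeom.tsum_eq ▸ Summable.tsum_le_tsum hle
    (.of_nonneg_of_le (fun n => by have := hb0 n; positivity) hle hgeom.summable) hgeom.summable

theorem cubic_nonneg_of_le_root {r rs : ℝ} (hrs : rs ∈ Ioo (0 : ℝ) 1)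
    (hroot : 3 * rs ^ 3 - 5 * rs ^ 2 - 3 * rs + 1 = 0) (hr0 : 0 ≤ r) (hr : r ≤ rs) :
    0 ≤ 3 * r ^ 3 - 5 * r ^ 2 - 3 * r + 1 := by
  nlinarith [mul_nonneg (sub_nonneg.2 hr) hr0, mul_nonneg (sub_nonneg.2 hr) hrs.1.le,
    mul_nonneg (mul_nonneg (sub_nonneg.2 hr) hr0) hr0,
    mul_nonneg (mul_nonneg (sub_nonneg.2 hr) hrs.1.le) hrs.1.le,
    mul_nonneg (mul_nonneg (sub_nonneg.2 hr) hr0) hrs.1.le, hrs.2, hrs.1]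

/-- For `λ = 1` this inequality is equivalent to `3r³ - 5r² - 3r + 1 ≥ 0`, and `λ = 1` is the
extreme case. -/
theorem bohr_majorant_le {lam r : ℝ} (hlam0 : 0 ≤ lam) (hlam1 : lam ≤ 1) (hr0 : 0 ≤ r)
    (hr1 : r < 1) (hp : 0 ≤ 3 * r ^ 3 - 5 * r ^ 2 - 3 * r + 1) :
    2 * lam * (r / (1 - r)) +
        (1 / (2 - lam) + r / (1 - r)) * ((2 * lam) ^ 2 * (r ^ 2 / (1 - r ^ 2))) ≤ lam := by
  have h1r : 0 < 1 - r := by linarith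
  have h1r2 : 0 < 1 - r ^ 2 := by nlinarith
  have h2lam : 0 < 2 - lam := by linarith
  have hlr : lam * r ≤ 1 := by nlinarith
  have hB : 0 ≤ (1 - r ^ 2) * (1 - 3 * r) := by nlinarith
  have haux : 0 ≤ (1 - r ^ 2) * (1 - 3 * r) + 4 * r ^ 2 * (1 - lam * r) := by nlinarith
  have hQ : 0 ≤ (2 - lam) * ((1 - r ^ 2) * (1 - 3 * r)) - 4 * lam * r ^ 2 * (1 + r - lam * r) := by
    nlinarith [mul_nonneg (by linarith : (0 : ℝ) ≤ 1 - lam) haux]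
  rw [show 2 * lam * (r / (1 - r)) + (1 / (2 - lam) + r / (1 - r)) *
      ((2 * lam) ^ 2 * (r ^ 2 / (1 - r ^ 2))) =
      (2 * lam * r * (2 - lam) * (1 - r ^ 2) + ((1 - r) + r * (2 - lam)) * (4 * lam ^ 2 * r ^ 2)) /
        ((2 - lam) * (1 - r) * (1 - r ^ 2)) by field_simp; ring,
    div_le_iff₀ (by positivity)]
  nlinarith [mul_nonneg hlam0 hQ]

theorem bohr_sum_le {b : ℕ → ℝ} {lam rs r : ℝ} (hb0 : ∀ n, 0 ≤ b n) (hb : ∀ n, b n ≤ 2 * lam)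
    (hlam1 : lam ≤ 1) (hrs : rs ∈ Ioo (0 : ℝ) 1)
    (hroot : 3 * rs ^ 3 - 5 * rs ^ 2 - 3 * rs + 1 = 0) (hr0 : 0 ≤ r) (hr : r ≤ rs) :
    ∑' n, b n * r ^ (n + 1) + (1 / (2 - lam) + r / (1 - r)) * ∑' n, b n ^ 2 * r ^ (2 * (n + 1))
      ≤ lam := by
  have hlam0 : 0 ≤ lam := by linarith [hb0 0, hb 0]
  have hr1 : r < 1 := hr.trans_lt hrs.2
  have hlinear := tsum_mul_pow_succ_le hb0 hb hr0 hr1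
  have hquadratic : ∑' n, b n ^ 2 * r ^ (2 * (n + 1)) ≤ (2 * lam) ^ 2 * (r ^ 2 / (1 - r ^ 2)) := by
    simp_rw [pow_mul]
    exact tsum_mul_pow_succ_le (fun n => sq_nonneg _) (fun n => pow_le_pow_left₀ (hb0 n) (hb n) 2)
      (sq_nonneg r) (by nlinarith)
  have hcoeff : 0 ≤ 1 / (2 - lam) + r / (1 - r) := by
    have : 0 < 2 - lam := by linarith
    have : 0 < 1 - r := by linarith
    positivity
  calc _ ≤ 2 * lam * (r / (1 - r)) + (1 / (2 - lam) + r / (1 - r)) *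
        ((2 * lam) ^ 2 * (r ^ 2 / (1 - r ^ 2))) :=
        add_le_add hlinear (mul_le_mul_of_nonneg_left hquadratic hcoeff)
    _ ≤ lam := bohr_majorant_le hlam0 hlam1 hr0 hr1 (cubic_nonneg_of_le_root hrs hroot hr0 hr)

/-- **Theorem 2.** Let `g` be analytic and univalent in the unit disk with convex image, let
`f(z) = Σ aₙ zⁿ` be subordinate to `g`, and let `λ = dist(g(0), ∂g(D)) ≤ 1`. Then
`Σ_{n≥1} |aₙ| rⁿ + (1/(2−λ) + r/(1−r)) Σ_{n≥1} |aₙ|² r^{2n} ≤ λ` for all `0 ≤ r ≤ r_*`,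
where `r_* ≈ 0.24683` is the unique root of `3r³ − 5r² − 3r + 1 = 0` in `(0,1)`. -/
theorem subordination_convex_bohr
    (f g ω : ℂ → ℂ) (a : ℕ → ℂ)
    (hg : DifferentiableOn ℂ g (ball (0 : ℂ) 1))
    (hginj : Set.InjOn g (ball (0 : ℂ) 1))
    (hconv : Convex ℝ (g '' ball (0 : ℂ) 1))
    (hf : ∀ z ∈ ball (0 : ℂ) 1, HasSum (fun n : ℕ => a n * z ^ n) (f z))
    (hω : DifferentiableOn ℂ ω (ball (0 : ℂ) 1))
    (hω0 : ω 0 = 0)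
    (hωb : ∀ z ∈ ball (0 : ℂ) 1, ‖ω z‖ ≤ 1)
    (hsub : ∀ z ∈ ball (0 : ℂ) 1, f z = g (ω z))
    (lam : ℝ) (hlam : lam = infDist (g 0) (frontier (g '' ball (0 : ℂ) 1)))
    (hlam1 : lam ≤ 1)
    (rs : ℝ) (hrs : rs ∈ Set.Ioo (0 : ℝ) 1)
    (hroot : 3 * rs ^ 3 - 5 * rs ^ 2 - 3 * rs + 1 = 0)
    (r : ℝ) (hr0 : 0 ≤ r) (hr : r ≤ rs) :
    (∑' n : ℕ, ‖a (n + 1)‖ * r ^ (n + 1)) +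
      (1 / (2 - lam) + r / (1 - r)) *
        (∑' n : ℕ, (‖a (n + 1)‖) ^ 2 * r ^ (2 * (n + 1))) ≤ lam := by
  have h0 : (0 : ℂ) ∈ ball (0 : ℂ) 1 := mem_ball_self one_pos
  have hball : (ball (0 : ℂ) 1).Nontrivial := ⟨0, h0, 1 / 2, by norm_num, by norm_num⟩
  have hpre : IsPreconnected (ball (0 : ℂ) 1) := (convex_ball 0 1).isPreconnected
  have hωmaps : MapsTo ω (ball 0 1) (ball 0 1) :=
    mapsTo_ball_of_norm_le hω isOpen_ball hpre h0 (by simp [hω0]) hωb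
  have hfmaps : MapsTo f (ball 0 1) (g '' ball 0 1) := fun z hz =>
    hsub z hz ▸ mem_image_of_mem g (hωmaps hz)
  have hopen : IsOpen (g '' ball 0 1) :=
    isOpen_image_of_injOn hg isOpen_ball hpre hball hginj subset_rfl isOpen_ball
  have hne : g '' ball 0 1 ≠ univ :=
    image_ne_univ_of_injOn hg isOpen_ball hpre hball isBounded_ball hginj
  have hcoeff : ∀ n, ‖a (n + 1)‖ ≤ 2 * lam := fun n => by
    have := norm_coeff_le_two_mul_infDist_frontier hconv hopen hne hf hfmaps n.succ_ne_zero
    rwa [hsub 0 h0, hω0, ← hlam] at this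
  exact bohr_sum_le (fun n => norm_nonneg _) hcoeff hlam1 hrs hroot hr0 hr
end
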